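/- arXiv:1311.4651 — 5 statements merged into one kernel-verified Lean document; each statement's English description precedes it below -/
import Mathlib

section
/- Let Π be a monotone skew-product semiflow on X₊ × Y over the minimal base flow, let K ⊆ X₊ × Y be a compact invariant set admitting a minimal flow extension, and let p* : Y → X₊ be a 1-cover of Y. If (z,y) ∈ K satisfies p*(y) ≤ z, then u(t,p*(y),y) ≤ u(t,z,y) for all t ∈ ℝ; that is, p*(y·t) ≤ u(t,z,y) for every t ∈ ℝ, where for t < 0 the value u(t,z,y) is taken along the flow extension of K. -/
open Set Filter Topology

section SkewProductFramework

variable {X Y : Type*} [NormedAddCommGroup X] [NormedSpace ℝ X]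
  [MetricSpace Y] [CompactSpace Y]

/-- A continuous flow on `Y`. -/
structure IsFlow (σ : ℝ → Y → Y) : Prop where
  cont : Continuous fun p : ℝ × Y => σ p.1 p.2
  map_zero : ∀ y, σ 0 y = y
  map_add : ∀ s t : ℝ, ∀ y, σ (s + t) y = σ s (σ t y)

/-- The flow on `Y` is minimal: no nonempty compact invariant subset other than `Y`. -/
def IsMinimalFlow (σ : ℝ → Y → Y) : Prop :=
  ∀ S : Set Y, S.Nonempty → IsCompact S → (∀ t, σ t '' S = S) → S = univ

/-- `Xp` is a closed (pointed, convex) positive cone in `X`. -/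
structure IsClosedCone (Xp : Set X) : Prop where
  closed : IsClosed Xp
  zero_mem : (0 : X) ∈ Xp
  add_mem : ∀ a ∈ Xp, ∀ b ∈ Xp, a + b ∈ Xp
  smul_mem : ∀ c : ℝ, 0 ≤ c → ∀ x ∈ Xp, c • x ∈ Xp
  eq_zero : ∀ x ∈ Xp, -x ∈ Xp → x = 0

/-- Order induced by the cone: `a ≤ b` iff `b - a ∈ Xp`. -/
def coneLE (Xp : Set X) (a b : X) : Prop := b - a ∈ Xp

/-- Strict order induced by the cone. -/
def coneLT (Xp : Set X) (a b : X) : Prop := coneLE Xp a b ∧ a ≠ b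

/-- `U < V` for sets: every element of `U` is strictly below every element of `V`. -/
def setLT (Xp : Set X) (U V : Set X) : Prop := ∀ a ∈ U, ∀ b ∈ V, coneLT Xp a b

/-- A skew-product semiflow `Π_t(x,y) = (u t x y, σ t y)` on `Xp × Y`. -/
structure IsSkewProduct (Xp : Set X) (σ : ℝ → Y → Y) (u : ℝ → X → Y → X) : Prop where
  cont : ContinuousOn (fun p : ℝ × X × Y => u p.1 p.2.1 p.2.2)
    (Ici (0 : ℝ) ×ˢ Xp ×ˢ (univ : Set Y))
  mem : ∀ t ≥ (0:ℝ), ∀ x ∈ Xp, ∀ y : Y, u t x y ∈ Xp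
  map_zero : ∀ x ∈ Xp, ∀ y : Y, u 0 x y = x
  map_add : ∀ t ≥ (0:ℝ), ∀ s ≥ (0:ℝ), ∀ x ∈ Xp, ∀ y : Y,
    u (t + s) x y = u t (u s x y) (σ s y)

/-- Forward orbit `O⁺(x,y)`. -/
def fwdOrbit (σ : ℝ → Y → Y) (u : ℝ → X → Y → X) (x : X) (y : Y) : Set (X × Y) :=
  {p | ∃ t ≥ (0:ℝ), p = (u t x y, σ t y)}

/-- Omega-limit set `ω(x,y)`. -/
def omegaSet (σ : ℝ → Y → Y) (u : ℝ → X → Y → X) (x : X) (y : Y) : Set (X × Y) :=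
  {p | ∃ tn : ℕ → ℝ, Tendsto tn atTop atTop ∧
        Tendsto (fun k => (u (tn k) x y, σ (tn k) y)) atTop (𝓝 p)}

/-- Uniform stability of the forward orbit `O⁺(x₀,y₀)`. -/
def IsUnifStable (Xp : Set X) (u : ℝ → X → Y → X) (x₀ : X) (y₀ : Y) : Prop :=
  ∀ ε > (0:ℝ), ∃ δ > (0:ℝ), ∀ x ∈ Xp, ∀ s ≥ (0:ℝ),
    ‖u s x₀ y₀ - u s x y₀‖ ≤ δ →
      ∀ t ≥ (0:ℝ), ‖u (t + s) x₀ y₀ - u (t + s) x y₀‖ < ε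

/-- Monotonicity of the skew-product semiflow. -/
def IsMonotoneSP (Xp : Set X) (u : ℝ → X → Y → X) : Prop :=
  ∀ t ≥ (0:ℝ), ∀ y : Y, ∀ x₁ ∈ Xp, ∀ x₂ ∈ Xp,
    coneLE Xp x₁ x₂ → coneLE Xp (u t x₁ y) (u t x₂ y)

/-- Strongly order-preserving skew-product semiflow. -/
def IsSOP (Xp : Set X) (u : ℝ → X → Y → X) : Prop :=
  IsMonotoneSP Xp u ∧
  ∃ t₀ > (0:ℝ), ∀ y : Y, ∀ x₁ ∈ Xp, ∀ x₂ ∈ Xp, coneLT Xp x₁ x₂ →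
    ∃ U V : Set X, IsOpen U ∧ IsOpen V ∧ x₁ ∈ U ∧ x₂ ∈ V ∧
      ∀ t ≥ t₀, setLT Xp ((fun x => u t x y) '' (U ∩ Xp)) ((fun x => u t x y) '' (V ∩ Xp))

/-- Fiber-compactness. -/
def IsFiberCompact (Xp : Set X) (u : ℝ → X → Y → X) : Prop :=
  ∃ tb > (0:ℝ), ∀ y : Y, ∀ B ⊆ Xp, Bornology.IsBounded B →
    ∀ t > tb, IsCompact (closure ((fun x => u t x y) '' B))

/-- A 1-cover of `Y`, described by its graph map `c : Y → X`. -/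
def IsOneCoverMap (Xp : Set X) (σ : ℝ → Y → Y) (u : ℝ → X → Y → X) (c : Y → X) : Prop :=
  Continuous c ∧ (∀ y, c y ∈ Xp) ∧ ∀ t ≥ (0:ℝ), ∀ y, u t (c y) y = c (σ t y)

/-- A compact positively invariant set that is a 1-cover of `Y`. -/
def IsOneCoverSet (Xp : Set X) (σ : ℝ → Y → Y) (u : ℝ → X → Y → X)
    (K : Set (X × Y)) : Prop :=
  IsCompact K ∧ (∀ p ∈ K, p.1 ∈ Xp) ∧
  (∀ t ≥ (0:ℝ), ∀ p ∈ K, (u t p.1 p.2, σ t p.2) ∈ K) ∧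
  ∀ y : Y, ∃! x : X, (x, y) ∈ K

/-- `Φ` is a (two-sided) flow extension of the semiflow on `K`. -/
def IsFlowExtension (σ : ℝ → Y → Y) (u : ℝ → X → Y → X) (K : Set (X × Y))
    (Φ : ℝ → X × Y → X × Y) : Prop :=
  ContinuousOn (fun q : ℝ × (X × Y) => Φ q.1 q.2) ((univ : Set ℝ) ×ˢ K) ∧
  (∀ t : ℝ, MapsTo (Φ t) K K) ∧
  (∀ p ∈ K, Φ 0 p = p) ∧
  (∀ s t : ℝ, ∀ p ∈ K, Φ (s + t) p = Φ s (Φ t p)) ∧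
  (∀ t ≥ (0:ℝ), ∀ p ∈ K, Φ t p = (u t p.1 p.2, σ t p.2))

/-- The flow extension `Φ` of `K` is minimal. -/
def IsMinimalExtension (K : Set (X × Y)) (Φ : ℝ → X × Y → X × Y) : Prop :=
  ∀ S : Set (X × Y), S ⊆ K → S.Nonempty → IsCompact S → (∀ t, Φ t '' S = S) → S = K

/-- `Γ` (given by `v`) is upper-comparable with respect to `Π` (given by `u`). -/
def UpperComparable (Xp : Set X) (u v : ℝ → X → Y → X) : Prop :=
  ∀ t ≥ (0:ℝ), ∀ y : Y, ∀ x₁ ∈ Xp, ∀ x₂ ∈ Xp,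
    coneLE Xp x₁ x₂ → coneLE Xp (v t x₁ y) (u t x₂ y)

/-- Every nonempty compact subset of `Xp` has a greatest lower bound in `X`. -/
def HasGLBs (Xp : Set X) : Prop :=
  ∀ S : Set X, S ⊆ Xp → S.Nonempty → IsCompact S →
    ∃ g : X, (∀ s ∈ S, coneLE Xp g s) ∧ ∀ g' : X, (∀ s ∈ S, coneLE Xp g' s) → coneLE Xp g' g

end SkewProductFramework

/-!
The set `S` of points of `K` lying above the 1-cover is closed and, by monotonicity,
forward invariant. The points of `K` whose whole orbit stays in `S` then form a nonempty
(by compactness, since the sets `K ∩ Φ t ⁻¹' S` decrease as `t` decreases) compact invariant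
subset of `K`, so by minimality they exhaust `K`. Hence every point of `K`, in particular
`Φ t (z, y)`, lies above the 1-cover.
-/

section FlowOnCompactSet

variable {α : Type*} [TopologicalSpace α] [T2Space α] {K S : Set α} {Φ : ℝ → α → α}

theorem eq_of_minimal_of_mapsTo_of_isClosed (hK : IsCompact K)
    (hcont : ∀ t, ContinuousOn (Φ t) K) (hmaps : ∀ t, MapsTo (Φ t) K K)
    (hzero : ∀ q ∈ K, Φ 0 q = q) (hadd : ∀ s t : ℝ, ∀ q ∈ K, Φ (s + t) q = Φ s (Φ t q))
    (hmin : ∀ B ⊆ K, B.Nonempty → IsCompact B → (∀ t, Φ t '' B = B) → B = K)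
    (hSK : S ⊆ K) (hS : IsClosed S) (hSne : S.Nonempty)
    (hfwd : ∀ t ≥ (0 : ℝ), MapsTo (Φ t) S S) : S = K := by
  set F : ℝ → Set α := fun t => K ∩ Φ t ⁻¹' S
  have hF_closed : ∀ t, IsClosed (F t) := fun t =>
    (hcont t).preimage_isClosed_of_isClosed hK.isClosed hS
  have hF_mono : ∀ s t : ℝ, s ≤ t → F s ⊆ F t := by
    rintro s t hst q ⟨hq, hsq⟩
    refine ⟨hq, ?_⟩
    have := hfwd (t - s) (sub_nonneg.2 hst) hsq
    rwa [← hadd _ _ q hq, sub_add_cancel] at this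
  have hF_ne : ∀ t, (F t).Nonempty := by
    obtain ⟨q, hq⟩ := hSne
    refine fun t => ⟨Φ (-t) q, hmaps _ (hSK hq), ?_⟩
    rwa [mem_preimage, ← hadd _ _ q (hSK hq), add_neg_cancel, hzero q (hSK hq)]
  have hB_sub : (⋂ t, F t) ⊆ K := (iInter_subset F 0).trans inter_subset_left
  have hB_ne : (⋂ t, F t).Nonempty :=
    IsCompact.nonempty_iInter_of_directed_nonempty_isCompact_isClosed F
      (fun s t => ⟨min s t, hF_mono _ _ (min_le_left s t), hF_mono _ _ (min_le_right s t)⟩)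
      hF_ne (fun t => hK.of_isClosed_subset (hF_closed t) inter_subset_left) hF_closed
  have hB_maps : ∀ s, MapsTo (Φ s) (⋂ t, F t) (⋂ t, F t) := by
    intro s q hq
    have hqK := hB_sub hq
    refine mem_iInter.2 fun t => ⟨hmaps s hqK, ?_⟩
    rw [mem_preimage, ← hadd _ _ q hqK]
    exact (mem_iInter.1 hq (t + s)).2
  have hB_inv : ∀ s, Φ s '' (⋂ t, F t) = ⋂ t, F t := fun s =>
    (hB_maps s).image_subset.antisymm fun q hq =>
      ⟨Φ (-s) q, hB_maps (-s) hq, by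
        rw [← hadd _ _ q (hB_sub hq), add_neg_cancel, hzero q (hB_sub hq)]⟩
  have hB_eq : (⋂ t, F t) = K := hmin _ hB_sub hB_ne
    (hK.of_isClosed_subset (isClosed_iInter hF_closed) hB_sub) hB_inv
  refine hSK.antisymm fun q hq => ?_
  have := (mem_iInter.1 (hB_eq.symm ▸ hq : q ∈ ⋂ t, F t) 0).2
  rwa [mem_preimage, hzero q hq] at this

end FlowOnCompactSet

section SkewProduct

variable {X Y : Type*} [NormedAddCommGroup X] [MetricSpace Y]
  {Xp : Set X} {σ : ℝ → Y → Y} {u : ℝ → X → Y → X} {K : Set (X × Y)} {Φ : ℝ → X × Y → X × Y}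

def aboveGraph (Xp : Set X) (p : Y → X) (K : Set (X × Y)) : Set (X × Y) :=
  {q ∈ K | coneLE Xp (p q.2) q.1}

theorem isClosed_aboveGraph (hXp : IsClosed Xp) {p : Y → X} (hp : Continuous p)
    (hK : IsClosed K) : IsClosed (aboveGraph Xp p K) :=
  hK.inter (hXp.preimage (continuous_fst.sub (hp.comp continuous_snd)))

theorem IsOneCoverMap.coneLE_apply {p : Y → X} (hp : IsOneCoverMap Xp σ u p)
    (hmono : IsMonotoneSP Xp u) {t : ℝ} (ht : 0 ≤ t) {x : X} {y : Y} (hx : x ∈ Xp)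
    (h : coneLE Xp (p y) x) : coneLE Xp (p (σ t y)) (u t x y) :=
  hp.2.2 t ht y ▸ hmono t ht y _ (hp.2.1 y) x hx h

namespace IsFlowExtension

theorem continuousOn_apply (hΦ : IsFlowExtension σ u K Φ) (t : ℝ) : ContinuousOn (Φ t) K :=
  hΦ.1.comp (continuous_const.prodMk continuous_id).continuousOn fun _ hq => ⟨mem_univ t, hq⟩

theorem snd_apply (hflow : IsFlow σ) (hΦ : IsFlowExtension σ u K Φ) (t : ℝ) {q : X × Y}
    (hq : q ∈ K) : (Φ t q).2 = σ t q.2 := by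
  obtain ⟨-, hmaps, hzero, hadd, hpos⟩ := hΦ
  rcases le_or_gt 0 t with ht | ht
  · rw [hpos t ht q hq]
  · have hback : σ (-t) (Φ t q).2 = q.2 := by
      have := hadd (-t) t q hq
      rw [neg_add_cancel, hzero q hq, hpos (-t) (by linarith) _ (hmaps t hq)] at this
      exact (congrArg Prod.snd this).symm
    rw [← hback, ← hflow.map_add, add_neg_cancel, hflow.map_zero]

theorem mapsTo_aboveGraph (hΦ : IsFlowExtension σ u K Φ) (hKXp : ∀ q ∈ K, q.1 ∈ Xp)
    {p : Y → X} (hp : IsOneCoverMap Xp σ u p) (hmono : IsMonotoneSP Xp u) {t : ℝ}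
    (ht : 0 ≤ t) : MapsTo (Φ t) (aboveGraph Xp p K) (aboveGraph Xp p K) := by
  rintro q ⟨hqK, hq⟩
  refine ⟨hΦ.2.1 t hqK, ?_⟩
  rw [hΦ.2.2.2.2 t ht q hqK]
  exact hp.coneLE_apply hmono ht (hKXp q hqK) hq

theorem eq_of_isMinimalExtension (hΦ : IsFlowExtension σ u K Φ)
    (hΦmin : IsMinimalExtension K Φ) (hK : IsCompact K) {S : Set (X × Y)} (hSK : S ⊆ K)
    (hS : IsClosed S) (hSne : S.Nonempty) (hfwd : ∀ t ≥ (0 : ℝ), MapsTo (Φ t) S S) : S = K :=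
  eq_of_minimal_of_mapsTo_of_isClosed hK hΦ.continuousOn_apply hΦ.2.1 hΦ.2.2.1 hΦ.2.2.2.1
    hΦmin hSK hS hSne hfwd

end IsFlowExtension

end SkewProduct

theorem one_cover_below_minimal_set_all_times_general
    {X Y : Type*} [NormedAddCommGroup X] [NormedSpace ℝ X] [MetricSpace Y] [CompactSpace Y]
    (σ : ℝ → Y → Y) (Xp : Set X) (u : ℝ → X → Y → X)
    (hflow : IsFlow σ) (hcone : IsClosedCone Xp)
    (hmono : IsMonotoneSP Xp u)
    (K : Set (X × Y)) (hKcomp : IsCompact K) (hKXp : ∀ p ∈ K, p.1 ∈ Xp)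
    (Φ : ℝ → X × Y → X × Y) (hΦ : IsFlowExtension σ u K Φ)
    (hΦmin : IsMinimalExtension K Φ)
    (p : Y → X) (hp : IsOneCoverMap Xp σ u p)
    (z : X) (y : Y) (hz : (z, y) ∈ K) (hle : coneLE Xp (p y) z) :
    ∀ t : ℝ, coneLE Xp (p (σ t y)) ((Φ t (z, y)).1) := by
  have habove : aboveGraph Xp p K = K :=
    hΦ.eq_of_isMinimalExtension hΦmin hKcomp (sep_subset K _)
      (isClosed_aboveGraph hcone.closed hp.1 hKcomp.isClosed) ⟨(z, y), hz, hle⟩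
      fun _ ht => hΦ.mapsTo_aboveGraph hKXp hp hmono ht
  intro t
  have hmem : Φ t (z, y) ∈ aboveGraph Xp p K := by
    rw [habove]
    exact hΦ.2.1 t hz
  rw [← hΦ.snd_apply hflow t hz]
  exact hmem.2

/-- For a monotone skew-product semiflow, a compact invariant set `K`
admitting a minimal flow extension `Φ`, and a 1-cover `p*`, if `(z,y) ∈ K` with
`p* y ≤ z` then `p*(y·t) ≤ u(t,z,y)` for all `t ∈ ℝ`, where for `t < 0` the value
is taken along the flow extension. -/
theorem one_cover_below_minimal_set_all_times
    {X Y : Type*} [NormedAddCommGroup X] [NormedSpace ℝ X] [MetricSpace Y] [CompactSpace Y]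
    (σ : ℝ → Y → Y) (Xp : Set X) (u : ℝ → X → Y → X)
    (hflow : IsFlow σ) (hmin : IsMinimalFlow σ) (hcone : IsClosedCone Xp)
    (hsp : IsSkewProduct Xp σ u) (hmono : IsMonotoneSP Xp u)
    (K : Set (X × Y)) (hKcomp : IsCompact K) (hKXp : ∀ p ∈ K, p.1 ∈ Xp)
    (Φ : ℝ → X × Y → X × Y) (hΦ : IsFlowExtension σ u K Φ)
    (hΦmin : IsMinimalExtension K Φ)
    (p : Y → X) (hp : IsOneCoverMap Xp σ u p)
    (z : X) (y : Y) (hz : (z, y) ∈ K) (hle : coneLE Xp (p y) z) :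
    ∀ t : ℝ, coneLE Xp (p (σ t y)) ((Φ t (z, y)).1) :=
  one_cover_below_minimal_set_all_times_general σ Xp u hflow hcone hmono K hKcomp hKXp Φ hΦ hΦmin p
    hp z y hz hle
end

section
/- Let Π be a strongly order-preserving, fiber-compact skew-product semiflow on X₊ × Y over the minimal base flow, with every forward orbit precompact and uniformly stable, and suppose every nonempty compact subset of X₊ has a greatest lower bound in X. Let A be the union of all 1-covers of Y for Π. Then A is totally ordered with respect to <: if c₁ and c₂ are distinct 1-covers of Y, then either c₁(y) < c₂(y) for every y ∈ Y, or c₂(y) < c₁(y) for every y ∈ Y; in particular each fiber A(y) = A ∩ P⁻¹(y) is totally ordered. -/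
/-!
Fix two distinct 1-covers `c₁, c₂`. By minimality of the base flow, a closed, nonempty,
positively invariant subset of `Y` is all of `Y`; applied to `{y | c₁ y ≤ c₂ y}` and to
`{y | c₁ y = c₂ y}`, it shows that the covers are strictly ordered as soon as they are comparable
at one point. So suppose `c₁ y` and `c₂ y` are incomparable for every `y`, fix `y₀`, and let
`Λ ⊆ [0, 1]` be the set of `l` such that the ω-limit set of `(l • c₂ y₀, y₀)` meets the
hypograph `{(z, y) | z ≤ c₁ y}` of `c₁`. Then `0 ∈ Λ` (the orbit of `0` stays below `c₁`) and
`1 ∉ Λ` (the ω-limit set of a point of `c₂` lies on the graph of `c₂`). Uniform stability makes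
ω-limit sets of nearby points uniformly close, so `Λ` contains its supremum `l*`. The ω-limit
point `(z, y)` found for `l*` satisfies `z < c₁ y`, because `z ≤ c₂ y` and `c₁ y ≰ c₂ y`; strong
order preservation maps a neighbourhood of `z` below `c₁` at time `t₀`, and stability then
puts every `l` slightly larger than `l*` in `Λ`, a contradiction.
-/

open Set Filter Topology

theorem IsCompact.inter_nonempty_of_forall_dist_le {α : Type*} [PseudoMetricSpace α]
    {K D : Set α} (hK : IsCompact K) (hD : IsClosed D)
    (h : ∀ ε > (0 : ℝ), ∃ k ∈ K, ∃ d ∈ D, dist k d ≤ ε) : (K ∩ D).Nonempty := by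
  by_contra hKD
  rw [← not_disjoint_iff_nonempty_inter, not_not] at hKD
  obtain ⟨r, hr, hsep⟩ := Metric.exists_pos_forall_lt_edist hK hD hKD
  obtain ⟨k, hk, d, hd, hkd⟩ := h (r / 2) (by positivity)
  have := hsep k hk d hd
  rw [edist_nndist, ENNReal.coe_lt_coe, ← NNReal.coe_lt_coe, coe_nndist] at this
  linarith

section SkewProduct

variable {X Y : Type*} [NormedAddCommGroup X] [MetricSpace Y] {σ : ℝ → Y → Y} {Xp : Set X}
  {u : ℝ → X → Y → X} {x x' z z' : X} {y₀ y : Y} {c c₁ c₂ : Y → X}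

theorem IsFlow.continuous_apply (hflow : IsFlow σ) (t : ℝ) : Continuous (σ t) :=
  hflow.cont.comp (continuous_const.prodMk continuous_id)

theorem IsMinimalFlow.eq_univ_of_mapsTo [CompactSpace Y] (hmin : IsMinimalFlow σ)
    (hflow : IsFlow σ) {E : Set Y} (hE : IsClosed E) (hne : E.Nonempty)
    (hinv : ∀ t ≥ (0 : ℝ), MapsTo (σ t) E E) : E = univ := by
  -- `S` is the largest invariant subset of `E`; it is nonempty by compactness of `Y`.
  set S := ⋂ t : ℝ, σ t ⁻¹' E
  have hclosed : ∀ t, IsClosed (σ t ⁻¹' E) := fun t => hE.preimage (hflow.continuous_apply t)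
  have hmono : Monotone fun t : ℝ => σ t ⁻¹' E := fun s t hst y hy => by
    simpa only [mem_preimage, ← hflow.map_add, sub_add_cancel] using
      hinv (t - s) (sub_nonneg.2 hst) hy
  have hSne : S.Nonempty := by
    obtain ⟨y, hy⟩ := hne
    refine IsCompact.nonempty_iInter_of_directed_nonempty_isCompact_isClosed _ hmono.directed_ge
      (fun t => ⟨σ (-t) y, ?_⟩) (fun t => (hclosed t).isCompact) hclosed
    rwa [mem_preimage, ← hflow.map_add, add_neg_cancel, hflow.map_zero]
  have hSinv : ∀ t, σ t '' S = S := fun t => by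
    refine Subset.antisymm ?_ fun y hy => ⟨σ (-t) y, mem_iInter.2 fun s => ?_, ?_⟩
    · rintro _ ⟨y, hy, rfl⟩
      exact mem_iInter.2 fun s => by
        rw [mem_preimage, ← hflow.map_add]
        exact mem_iInter.1 hy _
    · rw [mem_preimage, ← hflow.map_add]
      exact mem_iInter.1 hy _
    · rw [← hflow.map_add, add_neg_cancel, hflow.map_zero]
  have hS := hmin S hSne (isClosed_iInter hclosed).isCompact hSinv
  refine eq_univ_of_univ_subset (hS ▸ fun y hy => ?_)
  simpa only [mem_preimage, hflow.map_zero] using mem_iInter.1 hy 0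

theorem IsOneCoverMap.eq_of_eq [CompactSpace Y] (h₁ : IsOneCoverMap Xp σ u c₁)
    (h₂ : IsOneCoverMap Xp σ u c₂) (hflow : IsFlow σ) (hmin : IsMinimalFlow σ)
    (h : c₁ y₀ = c₂ y₀) (y : Y) : c₁ y = c₂ y := by
  refine (hmin.eq_univ_of_mapsTo hflow (E := {y | c₁ y = c₂ y}) (isClosed_eq h₁.1 h₂.1)
    ⟨y₀, h⟩ fun t ht y' (hy' : c₁ y' = c₂ y') => ?_).ge (mem_univ y)
  simp only [mem_ofPred_eq, ← h₁.2.2 t ht, ← h₂.2.2 t ht, hy']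

theorem IsUnifStable.eventually_dist_le {x₀ : X} (hst : IsUnifStable Xp u x₀ y₀)
    (hsp : IsSkewProduct Xp σ u) (hx₀ : x₀ ∈ Xp) {ε : ℝ} (hε : 0 < ε) :
    ∀ᶠ x in 𝓝 x₀, x ∈ Xp → ∀ t ≥ (0 : ℝ), dist (u t x₀ y₀) (u t x y₀) ≤ ε := by
  obtain ⟨δ, hδ, H⟩ := hst ε hε
  filter_upwards [Metric.closedBall_mem_nhds x₀ hδ] with x hx hxXp t ht
  have h0 : ‖u 0 x₀ y₀ - u 0 x y₀‖ ≤ δ := by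
    rwa [hsp.map_zero x₀ hx₀, hsp.map_zero x hxXp, ← dist_eq_norm, dist_comm]
  simpa only [add_zero, dist_eq_norm] using (H x hxXp 0 le_rfl h0 t ht).le

theorem mem_omegaSet_iff_mapClusterPt {p : X × Y} :
    p ∈ omegaSet σ u x y₀ ↔ MapClusterPt p atTop fun t => (u t x y₀, σ t y₀) := by
  refine ⟨fun ⟨tn, htn, hp⟩ => hp.mapClusterPt.of_comp htn, fun hp => ?_⟩
  obtain ⟨tn, hp, htn⟩ := hp.exists_seq_tendsto
  exact ⟨tn, htn, hp⟩

theorem exists_seq_of_mem_omegaSet {p : X × Y} (h : p ∈ omegaSet σ u x y₀) :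
    ∃ tn : ℕ → ℝ, (∀ k, 0 ≤ tn k) ∧ Tendsto tn atTop atTop ∧
      Tendsto (fun k => (u (tn k) x y₀, σ (tn k) y₀)) atTop (𝓝 p) := by
  obtain ⟨tn, htn, hp⟩ := h
  refine ⟨fun k => max (tn k) 0, fun k => le_max_right _ _,
    tendsto_atTop_mono (fun k => le_max_left _ _) htn, hp.congr' ?_⟩
  filter_upwards [htn.eventually_ge_atTop 0] with k hk
  rw [max_eq_left hk]

theorem isCompact_omegaSet (hK : IsCompact (closure (fwdOrbit σ u x y₀))) :
    IsCompact (omegaSet σ u x y₀) := by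
  refine hK.of_isClosed_subset ?_ fun p hp => ?_
  · have : omegaSet σ u x y₀ = {p | ClusterPt p (map (fun t => (u t x y₀, σ t y₀)) atTop)} :=
      Set.ext fun _ => mem_omegaSet_iff_mapClusterPt
    exact this ▸ isClosed_setOfPred_clusterPt
  · obtain ⟨tn, htn0, -, hp⟩ := exists_seq_of_mem_omegaSet hp
    exact mem_closure_of_tendsto hp (Eventually.of_forall fun k => ⟨tn k, htn0 k, rfl⟩)

theorem omegaSet_nonempty (hK : IsCompact (closure (fwdOrbit σ u x y₀))) :
    (omegaSet σ u x y₀).Nonempty := by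
  have hev : ∀ᶠ t in atTop, (u t x y₀, σ t y₀) ∈ closure (fwdOrbit σ u x y₀) :=
    (eventually_ge_atTop 0).mono fun t ht => subset_closure ⟨t, ht, rfl⟩
  obtain ⟨p, -, hp⟩ := hK.exists_mapClusterPt_of_frequently hev.frequently
  exact ⟨p, mem_omegaSet_iff_mapClusterPt.2 hp⟩

theorem eq_of_mem_omegaSet_of_isOneCoverMap (hc : IsOneCoverMap Xp σ u c)
    (h : (z, y) ∈ omegaSet σ u (c y₀) y₀) : z = c y := by
  obtain ⟨tn, htn0, -, hconv⟩ := exists_seq_of_mem_omegaSet h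
  obtain ⟨hz, hy⟩ := (Prod.tendsto_iff _ _).1 hconv
  exact tendsto_nhds_unique hz
    (((hc.1.tendsto y).comp hy).congr fun k => (hc.2.2 _ (htn0 k) y₀).symm)

theorem exists_mem_omegaSet_dist_le (hK : IsCompact (closure (fwdOrbit σ u x y₀))) {ε : ℝ}
    (hnear : ∀ t ≥ (0 : ℝ), dist (u t x y₀) (u t x' y₀) ≤ ε)
    (h : (z', y) ∈ omegaSet σ u x' y₀) : ∃ z, (z, y) ∈ omegaSet σ u x y₀ ∧ dist z z' ≤ ε := by
  obtain ⟨tn, htn0, htn, hconv⟩ := exists_seq_of_mem_omegaSet h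
  obtain ⟨⟨z, y''⟩, -, φ, hφ, hlim⟩ :=
    hK.tendsto_subseq fun k => subset_closure ⟨tn k, htn0 k, rfl⟩
  obtain ⟨hz, hy''⟩ := (Prod.tendsto_iff _ _).1 hlim
  obtain ⟨hz', hy⟩ := (Prod.tendsto_iff _ _).1 (hconv.comp hφ.tendsto_atTop)
  obtain rfl : y'' = y := tendsto_nhds_unique hy'' hy
  exact ⟨z, ⟨tn ∘ φ, htn.comp hφ.tendsto_atTop, hlim⟩,
    le_of_tendsto (hz.dist hz') (Eventually.of_forall fun k => hnear _ (htn0 _))⟩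

theorem omegaSet_inter_nonempty_of_forall_near {D : Set (X × Y)} (hD : IsClosed D)
    (hK : IsCompact (closure (fwdOrbit σ u x y₀)))
    (h : ∀ ε > (0 : ℝ), ∃ x', (omegaSet σ u x' y₀ ∩ D).Nonempty ∧
      ∀ t ≥ (0 : ℝ), dist (u t x y₀) (u t x' y₀) ≤ ε) :
    (omegaSet σ u x y₀ ∩ D).Nonempty := by
  refine (isCompact_omegaSet hK).inter_nonempty_of_forall_dist_le hD fun ε hε => ?_
  obtain ⟨x', ⟨⟨z', y⟩, hω', hD'⟩, hnear⟩ := h ε hε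
  obtain ⟨z, hω, hz⟩ := exists_mem_omegaSet_dist_le hK hnear hω'
  exact ⟨(z, y), hω, (z', y), hD', by simpa [Prod.dist_eq] using hz⟩

def hypograph (Xp : Set X) (c : Y → X) : Set (X × Y) := {p | coneLE Xp p.1 (c p.2)}

variable [NormedSpace ℝ X]

theorem IsClosedCone.smul_le_self (hcone : IsClosedCone Xp) (hx : x ∈ Xp) {l : ℝ} (hl : l ≤ 1) :
    coneLE Xp (l • x) x := by
  simpa only [coneLE, sub_smul, one_smul] using hcone.smul_mem _ (sub_nonneg.2 hl) x hx

theorem IsUnifStable.eventually_smul_dist_le {v : X} {l₀ : ℝ}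
    (hst : IsUnifStable Xp u (l₀ • v) y₀) (hsp : IsSkewProduct Xp σ u) (hcone : IsClosedCone Xp)
    (hv : v ∈ Xp) (hl₀ : 0 ≤ l₀) {ε : ℝ} (hε : 0 < ε) :
    ∀ᶠ l in 𝓝 l₀, 0 ≤ l → ∀ t ≥ (0 : ℝ), dist (u t (l₀ • v) y₀) (u t (l • v) y₀) ≤ ε :=
  ((continuous_id.smul continuous_const).tendsto l₀).eventually
    (hst.eventually_dist_le hsp (hcone.smul_mem l₀ hl₀ v hv) hε)
    |>.mono fun l hl hl0 => hl (hcone.smul_mem l hl0 v hv)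

theorem IsOneCoverMap.le_of_le [CompactSpace Y] (h₁ : IsOneCoverMap Xp σ u c₁)
    (h₂ : IsOneCoverMap Xp σ u c₂) (hflow : IsFlow σ) (hmin : IsMinimalFlow σ)
    (hcone : IsClosedCone Xp) (hmono : IsMonotoneSP Xp u) (h : coneLE Xp (c₁ y₀) (c₂ y₀)) (y : Y) :
    coneLE Xp (c₁ y) (c₂ y) := by
  refine (hmin.eq_univ_of_mapsTo hflow (E := {y | coneLE Xp (c₁ y) (c₂ y)})
    (hcone.closed.preimage (h₂.1.sub h₁.1)) ⟨y₀, h⟩ fun t ht y' hy' => ?_).ge (mem_univ y)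
  simpa only [mem_ofPred_eq, h₁.2.2 t ht, h₂.2.2 t ht] using
    hmono t ht y' _ (h₁.2.1 y') _ (h₂.2.1 y') hy'

theorem mem_cone_of_mem_omegaSet (hcone : IsClosedCone Xp) (hsp : IsSkewProduct Xp σ u)
    (hx : x ∈ Xp) (h : (z, y) ∈ omegaSet σ u x y₀) : z ∈ Xp := by
  obtain ⟨tn, htn0, -, hconv⟩ := exists_seq_of_mem_omegaSet h
  exact hcone.closed.mem_of_tendsto ((Prod.tendsto_iff _ _).1 hconv).1
    (Eventually.of_forall fun k => hsp.mem _ (htn0 k) x hx y₀)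

theorem IsSkewProduct.mem_omegaSet_apply (hsp : IsSkewProduct Xp σ u) (hflow : IsFlow σ)
    (hcone : IsClosedCone Xp) (hx : x ∈ Xp) (h : (z, y) ∈ omegaSet σ u x y₀) {t : ℝ}
    (ht : 0 ≤ t) : (u t z y, σ t y) ∈ omegaSet σ u x y₀ := by
  have hz := mem_cone_of_mem_omegaSet hcone hsp hx h
  obtain ⟨tn, htn0, htn, hconv⟩ := exists_seq_of_mem_omegaSet h
  refine ⟨fun k => t + tn k, tendsto_atTop_add_const_left _ t htn, ?_⟩
  have hcont : ContinuousOn (fun q : X × Y => (u t q.1 q.2, σ t q.2)) (Xp ×ˢ univ) :=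
    (hsp.cont.comp (continuous_const.prodMk continuous_id).continuousOn
      fun q hq => mk_mem_prod (mem_Ici.2 ht) hq).prodMk
      ((hflow.continuous_apply t).comp continuous_snd).continuousOn
  refine ((hcont (z, y) ⟨hz, trivial⟩).tendsto.comp (tendsto_nhdsWithin_iff.2
    ⟨hconv, Eventually.of_forall fun k => ⟨hsp.mem _ (htn0 k) x hx y₀, trivial⟩⟩)).congr
    fun k => ?_
  simp only [Function.comp_apply, hsp.map_add t ht (tn k) (htn0 k) x hx y₀, hflow.map_add]

theorem le_of_mem_omegaSet (hcone : IsClosedCone Xp) (hmono : IsMonotoneSP Xp u)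
    (hc : IsOneCoverMap Xp σ u c) (hx : x ∈ Xp) (hle : coneLE Xp x (c y₀))
    (h : (z, y) ∈ omegaSet σ u x y₀) : coneLE Xp z (c y) := by
  obtain ⟨tn, htn0, -, hconv⟩ := exists_seq_of_mem_omegaSet h
  obtain ⟨hz, hy⟩ := (Prod.tendsto_iff _ _).1 hconv
  refine hcone.closed.mem_of_tendsto (((hc.1.tendsto y).comp hy).sub hz)
    (Eventually.of_forall fun k => ?_)
  have := hmono (tn k) (htn0 k) y₀ x hx (c y₀) (hc.2.1 y₀) hle
  rwa [hc.2.2 (tn k) (htn0 k) y₀] at this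

theorem isClosed_hypograph (hcone : IsClosedCone Xp) (hc : Continuous c) :
    IsClosed (hypograph Xp c) :=
  hcone.closed.preimage ((hc.comp continuous_snd).sub continuous_fst)

theorem exists_forall_near_omegaSet_inter_hypograph_nonempty (hflow : IsFlow σ)
    (hcone : IsClosedCone Xp) (hsp : IsSkewProduct Xp σ u) (hsop : IsSOP Xp u)
    (hc : IsOneCoverMap Xp σ u c) (hx : x ∈ Xp)
    (hω : (z, y) ∈ omegaSet σ u x y₀) (hlt : coneLT Xp z (c y)) :
    ∃ ε > (0 : ℝ), ∀ x' ∈ Xp, IsCompact (closure (fwdOrbit σ u x' y₀)) →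
      (∀ t ≥ (0 : ℝ), dist (u t x y₀) (u t x' y₀) ≤ ε) →
        (omegaSet σ u x' y₀ ∩ hypograph Xp c).Nonempty := by
  obtain ⟨t₀, ht₀, hsep⟩ := hsop.2
  obtain ⟨U, V, hU, -, hzU, hcV, hUV⟩ :=
    hsep y z (mem_cone_of_mem_omegaSet hcone hsp hx hω) (c y) (hc.2.1 y) hlt
  obtain ⟨ε, hε, hball⟩ := Metric.isOpen_iff.1 hU z hzU
  refine ⟨ε / 2, half_pos hε, fun x' hx' hK' hnear => ?_⟩
  obtain ⟨z', hω', hz'⟩ :=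
    exists_mem_omegaSet_dist_le hK' (fun t ht => dist_comm (u t x y₀) _ ▸ hnear t ht) hω
  have hz'U : z' ∈ U := hball (by rw [Metric.mem_ball]; linarith)
  refine ⟨_, hsp.mem_omegaSet_apply hflow hcone hx' hω' ht₀.le, ?_⟩
  show coneLE Xp (u t₀ z' y) (c (σ t₀ y))
  rw [← hc.2.2 t₀ ht₀.le]
  exact (hUV t₀ le_rfl _ ⟨z', ⟨hz'U, mem_cone_of_mem_omegaSet hcone hsp hx' hω'⟩, rfl⟩
    _ ⟨c y, ⟨hcV, hc.2.1 y⟩, rfl⟩).1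

theorem IsOneCoverMap.exists_le_or_le [Nonempty Y] (h₁ : IsOneCoverMap Xp σ u c₁)
    (h₂ : IsOneCoverMap Xp σ u c₂) (hflow : IsFlow σ) (hcone : IsClosedCone Xp)
    (hsp : IsSkewProduct Xp σ u) (hsop : IsSOP Xp u)
    (horb : ∀ x ∈ Xp, ∀ y : Y,
      IsCompact (closure (fwdOrbit σ u x y)) ∧ IsUnifStable Xp u x y) :
    ∃ y, coneLE Xp (c₁ y) (c₂ y) ∨ coneLE Xp (c₂ y) (c₁ y) := by
  by_contra! hinc
  obtain ⟨y₀⟩ := ‹Nonempty Y›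
  have hxXp : ∀ l : ℝ, 0 ≤ l → l • c₂ y₀ ∈ Xp := fun l hl => hcone.smul_mem l hl _ (h₂.2.1 y₀)
  set Λ := {l ∈ Icc (0 : ℝ) 1 | (omegaSet σ u (l • c₂ y₀) y₀ ∩ hypograph Xp c₁).Nonempty}
  have h0 : (0 : ℝ) ∈ Λ := by
    obtain ⟨⟨z, y⟩, hω⟩ := omegaSet_nonempty (horb _ (hxXp 0 le_rfl) y₀).1
    refine ⟨⟨le_rfl, zero_le_one⟩, (z, y), hω, le_of_mem_omegaSet hcone hsop.1 h₁
      (hxXp 0 le_rfl) ?_ hω⟩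
    show c₁ y₀ - 0 • c₂ y₀ ∈ Xp
    rw [zero_smul, sub_zero]
    exact h₁.2.1 y₀
  have h1 : (1 : ℝ) ∉ Λ := by
    rintro ⟨-, ⟨z, y⟩, hω, hle⟩
    rw [one_smul] at hω
    exact (hinc y).2 (eq_of_mem_omegaSet_of_isOneCoverMap h₂ hω ▸ hle)
  have hbdd : BddAbove Λ := ⟨1, fun l hl => hl.1.2⟩
  set ls := sSup Λ
  have hls : ls ∈ Icc (0 : ℝ) 1 := ⟨le_csSup hbdd h0, csSup_le ⟨0, h0⟩ fun l hl => hl.1.2⟩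
  have hstab := fun ε (hε : 0 < ε) =>
    (horb _ (hxXp ls hls.1) y₀).2.eventually_smul_dist_le hsp hcone (h₂.2.1 y₀) hls.1 hε
  have hlsΛ : ls ∈ Λ := by
    refine ⟨hls, omegaSet_inter_nonempty_of_forall_near (isClosed_hypograph hcone h₁.1)
      (horb _ (hxXp ls hls.1) y₀).1 fun ε hε => ?_⟩
    obtain ⟨l, hl, hlΛ⟩ := ((hstab ε hε).and_frequently
      (mem_closure_iff_frequently.1 (csSup_mem_closure ⟨0, h0⟩ hbdd))).exists
    exact ⟨l • c₂ y₀, hlΛ.2, hl hlΛ.1.1⟩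
  obtain ⟨⟨zs, ys⟩, hωs, hzs₁⟩ := hlsΛ.2
  have hzs₂ : coneLE Xp zs (c₂ ys) := le_of_mem_omegaSet hcone hsop.1 h₂ (hxXp ls hls.1)
    (hcone.smul_le_self (h₂.2.1 y₀) hls.2) hωs
  obtain ⟨ε, hε, hpush⟩ := exists_forall_near_omegaSet_inter_hypograph_nonempty hflow hcone hsp
    hsop h₁ (hxXp ls hls.1) hωs ⟨hzs₁, fun h => (hinc ys).1 (h ▸ hzs₂)⟩
  have hls1 : ls < 1 := hls.2.lt_of_ne fun h => h1 (h ▸ hlsΛ)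
  obtain ⟨l, hl, hl'⟩ :=
    (((hstab ε hε).filter_mono nhdsWithin_le_nhds).and (Ioo_mem_nhdsGT hls1)).exists
  have hl0 : 0 ≤ l := hls.1.trans hl'.1.le
  have hlΛ : l ∈ Λ :=
    ⟨⟨hl0, hl'.2.le⟩, hpush _ (hxXp l hl0) (horb _ (hxXp l hl0) y₀).1 (hl hl0)⟩
  exact (le_csSup hbdd hlΛ).not_gt hl'.1

theorem IsOneCoverMap.lt_or_lt [CompactSpace Y] (h₁ : IsOneCoverMap Xp σ u c₁)
    (h₂ : IsOneCoverMap Xp σ u c₂) (hflow : IsFlow σ) (hmin : IsMinimalFlow σ)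
    (hcone : IsClosedCone Xp) (hsp : IsSkewProduct Xp σ u) (hsop : IsSOP Xp u)
    (horb : ∀ x ∈ Xp, ∀ y : Y,
      IsCompact (closure (fwdOrbit σ u x y)) ∧ IsUnifStable Xp u x y) (hne : c₁ ≠ c₂) :
    (∀ y, coneLT Xp (c₁ y) (c₂ y)) ∨ (∀ y, coneLT Xp (c₂ y) (c₁ y)) := by
  obtain ⟨y₀, hy₀⟩ := Function.ne_iff.1 hne
  have hne' : ∀ y, c₁ y ≠ c₂ y := fun y h => hy₀ (h₁.eq_of_eq h₂ hflow hmin h y₀)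
  have : Nonempty Y := ⟨y₀⟩
  obtain ⟨y, hy | hy⟩ := h₁.exists_le_or_le h₂ hflow hcone hsp hsop horb
  · exact Or.inl fun y' => ⟨h₁.le_of_le h₂ hflow hmin hcone hsop.1 hy y', hne' y'⟩
  · exact Or.inr fun y' => ⟨h₂.le_of_le h₁ hflow hmin hcone hsop.1 hy y', (hne' y').symm⟩

end SkewProduct

theorem one_covers_totally_ordered_general
    {X Y : Type*} [NormedAddCommGroup X] [NormedSpace ℝ X] [MetricSpace Y] [CompactSpace Y]
    (σ : ℝ → Y → Y) (Xp : Set X) (u : ℝ → X → Y → X)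
    (hflow : IsFlow σ) (hmin : IsMinimalFlow σ) (hcone : IsClosedCone Xp)
    (hsp : IsSkewProduct Xp σ u) (hsop : IsSOP Xp u)
    (horb : ∀ x ∈ Xp, ∀ y : Y,
      IsCompact (closure (fwdOrbit σ u x y)) ∧ IsUnifStable Xp u x y) :
    (∀ c₁ c₂ : Y → X, IsOneCoverMap Xp σ u c₁ → IsOneCoverMap Xp σ u c₂ → c₁ ≠ c₂ →
      (∀ y : Y, coneLT Xp (c₁ y) (c₂ y)) ∨ (∀ y : Y, coneLT Xp (c₂ y) (c₁ y))) ∧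
    ∀ y : Y, ∀ a ∈ {x : X | ∃ c : Y → X, IsOneCoverMap Xp σ u c ∧ c y = x},
      ∀ b ∈ {x : X | ∃ c : Y → X, IsOneCoverMap Xp σ u c ∧ c y = x},
        coneLE Xp a b ∨ coneLE Xp b a := by
  have hlt := fun c₁ c₂ (h₁ : IsOneCoverMap Xp σ u c₁) (h₂ : IsOneCoverMap Xp σ u c₂) =>
    h₁.lt_or_lt h₂ hflow hmin hcone hsp hsop horb
  refine ⟨hlt, ?_⟩
  rintro y _ ⟨c₁, h₁, rfl⟩ _ ⟨c₂, h₂, rfl⟩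
  by_cases hc : c₁ = c₂
  · subst hc
    left
    simpa only [coneLE, sub_self] using hcone.zero_mem
  · exact (hlt c₁ c₂ h₁ h₂ hc).imp (fun h => (h y).1) fun h => (h y).1

/-- **Statement 7** (Lemma 4.1, first part). Under the standing hypotheses, the union
`A` of all 1-covers of `Y` for `Π` is totally ordered with respect to `<`: two distinct
1-covers `c₁, c₂` satisfy either `c₁(y) < c₂(y)` for every `y`, or `c₂(y) < c₁(y)` for
every `y`; in particular each fiber `A(y)` is totally ordered. -/
theorem one_covers_totally_ordered
    {X Y : Type*} [NormedAddCommGroup X] [NormedSpace ℝ X] [MetricSpace Y] [CompactSpace Y]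
    (σ : ℝ → Y → Y) (Xp : Set X) (u : ℝ → X → Y → X)
    (hflow : IsFlow σ) (hmin : IsMinimalFlow σ) (hcone : IsClosedCone Xp)
    (hsp : IsSkewProduct Xp σ u) (hsop : IsSOP Xp u) (hfc : IsFiberCompact Xp u)
    (hglb : HasGLBs Xp)
    (horb : ∀ x ∈ Xp, ∀ y : Y,
      IsCompact (closure (fwdOrbit σ u x y)) ∧ IsUnifStable Xp u x y) :
    (∀ c₁ c₂ : Y → X, IsOneCoverMap Xp σ u c₁ → IsOneCoverMap Xp σ u c₂ → c₁ ≠ c₂ →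
      (∀ y : Y, coneLT Xp (c₁ y) (c₂ y)) ∨ (∀ y : Y, coneLT Xp (c₂ y) (c₁ y))) ∧
    ∀ y : Y, ∀ a ∈ {x : X | ∃ c : Y → X, IsOneCoverMap Xp σ u c ∧ c y = x},
      ∀ b ∈ {x : X | ∃ c : Y → X, IsOneCoverMap Xp σ u c ∧ c y = x},
        coneLE Xp a b ∨ coneLE Xp b a :=
  one_covers_totally_ordered_general σ Xp u hflow hmin hcone hsp hsop horb
end

section
/- Let Π be a monotone skew-product semiflow on X₊ × Y over the minimal base flow and let Γ be a skew-product semiflow on X₊ × Y which is upper-comparable with respect to Π. Let K̂ ⊆ X₊ × Y be a compact Γ-invariant set admitting a minimal flow extension, let q₁ : Y → X₊ be a 1-cover of Y for Π, and let (c̄,y) ∈ K̂ with c̄ ≤ q₁(y). Then v(t,c̄,y) ≤ u(t,q₁(y),y) = q₁(y·t) for all t ∈ ℝ, where for t < 0 the value v(t,c̄,y) is taken along the flow extension of K̂. -/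
open Set Filter Topology

/-- **Statement 11.** Let `Π` (given by `u`) be monotone and `Γ` (given by `v`)
upper-comparable with respect to `Π`. Let `K̂` be a compact `Γ`-invariant set with a
minimal flow extension `Φ`, `q₁` a 1-cover for `Π`, and `(c̄,y) ∈ K̂` with
`c̄ ≤ q₁(y)`. Then `v(t,c̄,y) ≤ q₁(y·t)` for all `t ∈ ℝ`, the value for `t < 0` being
taken along the flow extension. -/
theorem comparable_domination_all_times
    {X Y : Type*} [NormedAddCommGroup X] [NormedSpace ℝ X] [MetricSpace Y] [CompactSpace Y]
    (σ : ℝ → Y → Y) (Xp : Set X) (u v : ℝ → X → Y → X)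
    (hflow : IsFlow σ) (hmin : IsMinimalFlow σ) (hcone : IsClosedCone Xp)
    (hsp : IsSkewProduct Xp σ u) (hmono : IsMonotoneSP Xp u)
    (hspΓ : IsSkewProduct Xp σ v) (hcomp : UpperComparable Xp u v)
    (K : Set (X × Y)) (hKcomp : IsCompact K) (hKXp : ∀ p ∈ K, p.1 ∈ Xp)
    (Φ : ℝ → X × Y → X × Y) (hΦ : IsFlowExtension σ v K Φ)
    (hΦmin : IsMinimalExtension K Φ)
    (q₁ : Y → X) (hq₁ : IsOneCoverMap Xp σ u q₁)
    (cbar : X) (y : Y) (hc : (cbar, y) ∈ K) (hle : coneLE Xp cbar (q₁ y)) :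
    ∀ t : ℝ, coneLE Xp ((Φ t (cbar, y)).1) (q₁ (σ t y)) := by
  obtain ⟨hΦcont, hΦmaps, hΦzero, hΦadd, hΦpos⟩ := hΦ
  obtain ⟨hq₁c, hq₁Xp, hq₁flow⟩ := hq₁
  -- second component of Φ is σ, for all times
  have hsnd : ∀ t : ℝ, ∀ p ∈ K, (Φ t p).2 = σ t p.2 := by
    intro t p hp
    rcases le_or_gt 0 t with ht | ht
    · rw [hΦpos t ht p hp]
    · have hz : Φ t p ∈ K := hΦmaps t hp
      have h1 : Φ (-t) (Φ t p) = p := by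
        rw [← hΦadd (-t) t p hp, neg_add_cancel, hΦzero p hp]
      have h2 : Φ (-t) (Φ t p) = (v (-t) (Φ t p).1 (Φ t p).2, σ (-t) (Φ t p).2) :=
        hΦpos (-t) (by linarith) _ hz
      have h3 : σ (-t) (Φ t p).2 = p.2 := by
        have h4 := congrArg Prod.snd h2
        rw [h1] at h4
        exact h4.symm
      calc (Φ t p).2 = σ (t + -t) (Φ t p).2 := by rw [add_neg_cancel, hflow.map_zero]
        _ = σ t (σ (-t) (Φ t p).2) := hflow.map_add t (-t) _
        _ = σ t p.2 := by rw [h3]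
  set S : Set (X × Y) := {p | p ∈ K ∧ coneLE Xp p.1 (q₁ p.2)} with hS
  have hSsubK : S ⊆ K := fun p hp => hp.1
  have hSne : S.Nonempty := ⟨(cbar, y), hc, hle⟩
  have hSclosed : IsClosed S := by
    have : S = K ∩ ((fun p : X × Y => q₁ p.2 - p.1) ⁻¹' Xp) := by
      ext p; simp [hS, coneLE, Set.mem_inter_iff]
    rw [this]
    exact hKcomp.isClosed.inter (IsClosed.preimage
      ((hq₁c.comp continuous_snd).sub continuous_fst) hcone.closed)
  have hScomp : IsCompact S := hKcomp.of_isClosed_subset hSclosed hSsubK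
  -- positive invariance of S
  have hposinv : ∀ r ≥ (0:ℝ), ∀ p ∈ S, Φ r p ∈ S := by
    intro r hr p hp
    have hpK := hp.1
    have h1 : Φ r p = (v r p.1 p.2, σ r p.2) := hΦpos r hr p hpK
    refine ⟨hΦmaps r hpK, ?_⟩
    rw [h1]
    have := hcomp r hr p.2 p.1 (hKXp p hpK) (q₁ p.2) (hq₁Xp p.2) hp.2
    simpa [hq₁flow r hr p.2] using this
  -- continuity and injectivity of Φ r on K
  have hcontPhi : ∀ r : ℝ, ContinuousOn (Φ r) K := by
    intro r
    have : ContinuousOn ((fun q : ℝ × (X × Y) => Φ q.1 q.2) ∘ fun p => (r, p)) K :=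
      hΦcont.comp (continuous_const.prodMk continuous_id).continuousOn
        (fun p hp => ⟨Set.mem_univ _, hp⟩)
    exact this
  have hinj : ∀ r : ℝ, Set.InjOn (Φ r) K := by
    intro r p hp q hq h
    have h1 : Φ (-r) (Φ r p) = p := by
      rw [← hΦadd (-r) r p hp, neg_add_cancel, hΦzero p hp]
    have h2 : Φ (-r) (Φ r q) = q := by
      rw [← hΦadd (-r) r q hq, neg_add_cancel, hΦzero q hq]
    rw [← h1, ← h2, h]
  set A : ℝ → Set (X × Y) := fun r => Φ r '' S with hA
  have hAsubK : ∀ r, A r ⊆ K := fun r => by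
    rintro _ ⟨p, hp, rfl⟩; exact hΦmaps r (hSsubK hp)
  have hAcomp : ∀ r, IsCompact (A r) := fun r =>
    hScomp.image_of_continuousOn ((hcontPhi r).mono hSsubK)
  have hAne : ∀ r, (A r).Nonempty := fun r => hSne.image _
  have hA0 : A 0 = S := by
    rw [hA]
    simp only
    rw [Set.image_congr (fun p hp => hΦzero p (hSsubK hp)), Set.image_id']
  have hAcomp' : ∀ r₁ r₂ : ℝ, r₁ ≤ r₂ → A r₂ ⊆ A r₁ := by
    intro r₁ r₂ h
    have key : ∀ p ∈ S, Φ r₂ p = Φ r₁ (Φ (r₂ - r₁) p) := by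
      intro p hp
      rw [← hΦadd r₁ (r₂ - r₁) p (hSsubK hp)]
      ring_nf
    rintro _ ⟨p, hp, rfl⟩
    rw [key p hp]
    exact ⟨Φ (r₂ - r₁) p, hposinv (r₂ - r₁) (by linarith) p hp, rfl⟩
  set M : Set (X × Y) := ⋂ r : ℝ, A r with hM
  have hMsubS : M ⊆ S := by rw [← hA0]; exact Set.iInter_subset A 0
  have hMsubK : M ⊆ K := hMsubS.trans hSsubK
  have hMne : M.Nonempty := by
    apply IsCompact.nonempty_iInter_of_directed_nonempty_isCompact_isClosed
    · intro r₁ r₂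
      exact ⟨max r₁ r₂, hAcomp' r₁ _ (le_max_left _ _), hAcomp' r₂ _ (le_max_right _ _)⟩
    · exact hAne
    · exact hAcomp
    · exact fun r => (hAcomp r).isClosed
  have hMcomp : IsCompact M :=
    hKcomp.of_isClosed_subset (isClosed_iInter fun r => (hAcomp r).isClosed) hMsubK
  -- full invariance of M
  have hMinv : ∀ s : ℝ, Φ s '' M = M := by
    intro s
    have hUsub : (⋃ r : ℝ, A r) ⊆ K := Set.iUnion_subset hAsubK
    have h1 : Φ s '' M = ⋂ r : ℝ, Φ s '' A r :=
      Set.InjOn.image_iInter_eq ((hinj s).mono hUsub)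
    have h2 : ∀ r : ℝ, Φ s '' A r = A (s + r) := by
      intro r
      rw [hA]
      simp only
      rw [Set.image_image]
      exact Set.image_congr fun p hp => (hΦadd s r p (hSsubK hp)).symm
    rw [h1]
    have h3 : (⋂ r : ℝ, Φ s '' A r) = ⋂ r : ℝ, A (s + r) := by
      exact Set.iInter_congr h2
    rw [h3, hM]
    ext x
    simp only [Set.mem_iInter]
    constructor
    · intro h r
      have := h (r - s)
      rwa [add_sub_cancel] at this
    · intro h r
      exact h (s + r)
  have hMK : M = K := hΦmin M hMsubK hMne hMcomp hMinv
  have hKS : K ⊆ S := hMK ▸ hMsubS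
  intro t
  have h1 : Φ t (cbar, y) ∈ S := hKS (hΦmaps t hc)
  have h2 := h1.2
  rwa [hsnd t (cbar, y) hc] at h2
end

section
/- Let Π be a monotone skew-product semiflow on X₊ × Y over the minimal base flow, let Γ be a skew-product semiflow on X₊ × Y which is upper-comparable with respect to Π, and let c : Y → X₊ be a 1-cover of Y for Π. Let (x₀,y₀) ∈ X₊ × Y have precompact Γ-forward orbit. If there exists T ≥ 0 with v(T,x₀,y₀) ≤ u(T,c(y₀),y₀) = c(y₀·T), then x ≤ c(y) for every (x,y) ∈ ω_Γ(x₀,y₀). -/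
open Set Filter Topology

/-- **Statement 13.** Let `Π` (given by `u`) be monotone, `Γ` (given by `v`)
upper-comparable with respect to `Π`, and `c` a 1-cover for `Π`. If `(x₀,y₀)` has
precompact `Γ`-forward orbit and `v(T,x₀,y₀) ≤ c(y₀·T)` for some `T ≥ 0`, then
`x ≤ c(y)` for every `(x,y) ∈ ω_Γ(x₀,y₀)`. -/
theorem omega_limit_dominated_by_one_cover
    {X Y : Type*} [NormedAddCommGroup X] [NormedSpace ℝ X] [MetricSpace Y] [CompactSpace Y]
    (σ : ℝ → Y → Y) (Xp : Set X) (u v : ℝ → X → Y → X)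
    (hflow : IsFlow σ) (hmin : IsMinimalFlow σ) (hcone : IsClosedCone Xp)
    (hsp : IsSkewProduct Xp σ u) (hmono : IsMonotoneSP Xp u)
    (hspΓ : IsSkewProduct Xp σ v) (hcomp : UpperComparable Xp u v)
    (c : Y → X) (hc : IsOneCoverMap Xp σ u c)
    (x₀ : X) (y₀ : Y) (hx₀ : x₀ ∈ Xp)
    (hpre : IsCompact (closure (fwdOrbit σ v x₀ y₀)))
    (T : ℝ) (hT : 0 ≤ T) (hTle : coneLE Xp (v T x₀ y₀) (c (σ T y₀))) :
    ∀ p ∈ omegaSet σ v x₀ y₀, coneLE Xp p.1 (c p.2) := by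
  rintro p ⟨tn, htn, hconv⟩
  -- Key: for all s ≥ T, v s x₀ y₀ ≤ c (σ s y₀)
  have key : ∀ s : ℝ, T ≤ s → coneLE Xp (v s x₀ y₀) (c (σ s y₀)) := by
    intro s hs
    have ht : (0:ℝ) ≤ s - T := by linarith
    have hsplit : v s x₀ y₀ = v (s - T) (v T x₀ y₀) (σ T y₀) := by
      have := hspΓ.map_add (s - T) ht T hT x₀ hx₀ y₀
      simpa using this
    have hσ : σ s y₀ = σ (s - T) (σ T y₀) := by
      have := hflow.map_add (s - T) T y₀
      simpa using this
    have hcP : u (s - T) (c (σ T y₀)) (σ T y₀) = c (σ (s - T) (σ T y₀)) :=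
      hc.2.2 (s - T) ht (σ T y₀)
    have hle := hcomp (s - T) ht (σ T y₀) (v T x₀ y₀)
      (hspΓ.mem T hT x₀ hx₀ y₀) (c (σ T y₀)) (hc.2.1 _) hTle
    rw [hsplit, hσ, ← hcP]
    exact hle
  -- Pass to the limit
  have h1 : Tendsto (fun k => v (tn k) x₀ y₀) atTop (𝓝 p.1) :=
    (continuous_fst.tendsto p).comp hconv
  have h2 : Tendsto (fun k => σ (tn k) y₀) atTop (𝓝 p.2) :=
    (continuous_snd.tendsto p).comp hconv
  have h3 : Tendsto (fun k => c (σ (tn k) y₀) - v (tn k) x₀ y₀) atTop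
      (𝓝 (c p.2 - p.1)) :=
    ((hc.1.tendsto p.2).comp h2).sub h1
  have hev : ∀ᶠ k in atTop, c (σ (tn k) y₀) - v (tn k) x₀ y₀ ∈ Xp := by
    filter_upwards [htn.eventually_ge_atTop T] with k hk
    exact key (tn k) hk
  exact hcone.closed.mem_of_tendsto h3 hev
end

section
/- Let Ω ⊂ ℝ^m be a bounded domain and let X = ∏₁ⁿ C₀(Ω̄), where C₀(Ω̄) = {φ ∈ C(Ω̄,ℝ) : φ = 0 on ∂Ω}, equipped with the sup norm and the pointwise (componentwise) partial order. Then every nonempty compact subset S of X has a least upper bound and a greatest lower bound in X; these are given componentwise by the pointwise supremum and pointwise infimum over S, which are continuous functions on Ω̄ vanishing on ∂Ω. -/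
open Set

/-!
Evaluation `(x, φ) ↦ φ x` is jointly continuous because `Ω̄`, closed in `ℝᵐ`, is locally
compact, so taking the supremum (infimum) over the compact parameter set `S` yields a continuous
function of `x`. The
compact image of `S` under each evaluation is bounded, which makes the pointwise supremum the
least upper bound, and it vanishes on `∂Ω` because every member of `S` does.
-/

namespace ContinuousMap

section PointwiseSupInf

variable {X ι α : Type*} [TopologicalSpace X] [TopologicalSpace α]

theorem isCompact_image_eval {S : Set C(X, ι → α)} (hS : IsCompact S) (x : X) (i : ι) :
    IsCompact ((fun φ : C(X, ι → α) => φ x i) '' S) :=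
  hS.image ((continuous_apply i).comp (continuous_eval_const x))

variable [LocallyCompactSpace X] [ConditionallyCompleteLinearOrder α] [OrderTopology α]
  {S : Set C(X, ι → α)}

theorem continuous_eval_apply (i : ι) :
    Continuous fun p : X × C(X, ι → α) => p.2 p.1 i :=
  (continuous_apply i).comp (continuous_eval.comp continuous_swap)

def pointwiseSup (S : Set C(X, ι → α)) (hS : IsCompact S) : C(X, ι → α) where
  toFun x i := sSup ((fun φ : C(X, ι → α) => φ x i) '' S)
  continuous_toFun := continuous_pi fun i => hS.continuous_sSup (continuous_eval_apply i)

def pointwiseInf (S : Set C(X, ι → α)) (hS : IsCompact S) : C(X, ι → α) where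
  toFun x i := sInf ((fun φ : C(X, ι → α) => φ x i) '' S)
  continuous_toFun := continuous_pi fun i => hS.continuous_sInf (continuous_eval_apply i)

variable (hS : IsCompact S)

theorem le_pointwiseSup {φ : C(X, ι → α)} (hφ : φ ∈ S) (x : X) (i : ι) :
    φ x i ≤ pointwiseSup S hS x i :=
  le_csSup (isCompact_image_eval hS x i).bddAbove (mem_image_of_mem _ hφ)

theorem pointwiseInf_le {φ : C(X, ι → α)} (hφ : φ ∈ S) (x : X) (i : ι) :
    pointwiseInf S hS x i ≤ φ x i :=
  csInf_le (isCompact_image_eval hS x i).bddBelow (mem_image_of_mem _ hφ)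

theorem pointwiseSup_le (hne : S.Nonempty) {x : X} {i : ι} {a : α}
    (h : ∀ φ ∈ S, φ x i ≤ a) : pointwiseSup S hS x i ≤ a :=
  csSup_le (hne.image _) (forall_mem_image.mpr h)

theorem le_pointwiseInf (hne : S.Nonempty) {x : X} {i : ι} {a : α}
    (h : ∀ φ ∈ S, a ≤ φ x i) : a ≤ pointwiseInf S hS x i :=
  le_csInf (hne.image _) (forall_mem_image.mpr h)

theorem pointwiseSup_apply_of_forall_eq (hne : S.Nonempty) {x : X} {c : ι → α}
    (h : ∀ φ ∈ S, φ x = c) : pointwiseSup S hS x = c := by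
  funext i
  change sSup ((fun φ : C(X, ι → α) => φ x i) '' S) = c i
  rw [image_congr fun φ hφ => congrFun (h φ hφ) i, hne.image_const, csSup_singleton]

theorem pointwiseInf_apply_of_forall_eq (hne : S.Nonempty) {x : X} {c : ι → α}
    (h : ∀ φ ∈ S, φ x = c) : pointwiseInf S hS x = c := by
  funext i
  change sInf ((fun φ : C(X, ι → α) => φ x i) '' S) = c i
  rw [image_congr fun φ hφ => congrFun (h φ hφ) i, hne.image_const, csInf_singleton]

end PointwiseSupInf

end ContinuousMap

theorem compact_subset_of_C0_has_lub_and_glb_general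
    {m n : ℕ} (Ω : Set (EuclideanSpace ℝ (Fin m)))
    (X₀ : Set C(↥(closure Ω), Fin n → ℝ))
    (hX₀ : X₀ = {φ : C(↥(closure Ω), Fin n → ℝ) |
      ∀ x : ↥(closure Ω), (x : EuclideanSpace ℝ (Fin m)) ∈ frontier Ω → φ x = 0})
    (S : Set C(↥(closure Ω), Fin n → ℝ)) (hSX : S ⊆ X₀) (hne : S.Nonempty)
    (hcomp : IsCompact S) :
    (∃ w ∈ X₀,
      (∀ (x : ↥(closure Ω)) (i : Fin n), w x i = sSup {r : ℝ | ∃ φ ∈ S, φ x i = r}) ∧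
      (∀ φ ∈ S, ∀ (x : ↥(closure Ω)) (i : Fin n), φ x i ≤ w x i) ∧
      (∀ w' ∈ X₀, (∀ φ ∈ S, ∀ (x : ↥(closure Ω)) (i : Fin n), φ x i ≤ w' x i) →
        ∀ (x : ↥(closure Ω)) (i : Fin n), w x i ≤ w' x i)) ∧
    (∃ z ∈ X₀,
      (∀ (x : ↥(closure Ω)) (i : Fin n), z x i = sInf {r : ℝ | ∃ φ ∈ S, φ x i = r}) ∧
      (∀ φ ∈ S, ∀ (x : ↥(closure Ω)) (i : Fin n), z x i ≤ φ x i) ∧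
      (∀ z' ∈ X₀, (∀ φ ∈ S, ∀ (x : ↥(closure Ω)) (i : Fin n), z' x i ≤ φ x i) →
        ∀ (x : ↥(closure Ω)) (i : Fin n), z' x i ≤ z x i)) := by
  have : LocallyCompactSpace (closure Ω) := isClosed_closure.locallyCompactSpace
  subst hX₀
  have hS_zero : ∀ x : closure Ω, (x : EuclideanSpace ℝ (Fin m)) ∈ frontier Ω →
      ∀ φ ∈ S, φ x = 0 := fun x hx φ hφ => hSX hφ x hx
  refine ⟨⟨ContinuousMap.pointwiseSup S hcomp, ?_, fun _ _ => rfl,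
      fun φ hφ => ContinuousMap.le_pointwiseSup hcomp hφ, ?_⟩,
    ⟨ContinuousMap.pointwiseInf S hcomp, ?_, fun _ _ => rfl,
      fun φ hφ => ContinuousMap.pointwiseInf_le hcomp hφ, ?_⟩⟩
  · exact fun x hx => ContinuousMap.pointwiseSup_apply_of_forall_eq hcomp hne (hS_zero x hx)
  · exact fun w' _ hub x i => ContinuousMap.pointwiseSup_le hcomp hne fun φ hφ => hub φ hφ x i
  · exact fun x hx => ContinuousMap.pointwiseInf_apply_of_forall_eq hcomp hne (hS_zero x hx)
  · exact fun z' _ hlb x i => ContinuousMap.le_pointwiseInf hcomp hne fun φ hφ => hlb φ hφ x i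

/-- **Statement 15.** In `X = ∏₁ⁿ C₀(Ω̄)` (continuous functions on `Ω̄` vanishing on
`∂Ω`, with the sup-norm topology and pointwise componentwise order), every nonempty
compact subset `S` has a least upper bound and a greatest lower bound in `X`, given
componentwise by the pointwise supremum resp. infimum over `S`. -/
theorem compact_subset_of_C0_has_lub_and_glb
    {m n : ℕ} (Ω : Set (EuclideanSpace ℝ (Fin m)))
    (hopen : IsOpen Ω) (hconn : IsConnected Ω) (hbdd : Bornology.IsBounded Ω)
    (X₀ : Set C(↥(closure Ω), Fin n → ℝ))
    (hX₀ : X₀ = {φ : C(↥(closure Ω), Fin n → ℝ) |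
      ∀ x : ↥(closure Ω), (x : EuclideanSpace ℝ (Fin m)) ∈ frontier Ω → φ x = 0})
    (S : Set C(↥(closure Ω), Fin n → ℝ)) (hSX : S ⊆ X₀) (hne : S.Nonempty)
    (hcomp : IsCompact S) :
    (∃ w ∈ X₀,
      (∀ (x : ↥(closure Ω)) (i : Fin n), w x i = sSup {r : ℝ | ∃ φ ∈ S, φ x i = r}) ∧
      (∀ φ ∈ S, ∀ (x : ↥(closure Ω)) (i : Fin n), φ x i ≤ w x i) ∧
      (∀ w' ∈ X₀, (∀ φ ∈ S, ∀ (x : ↥(closure Ω)) (i : Fin n), φ x i ≤ w' x i) →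
        ∀ (x : ↥(closure Ω)) (i : Fin n), w x i ≤ w' x i)) ∧
    (∃ z ∈ X₀,
      (∀ (x : ↥(closure Ω)) (i : Fin n), z x i = sInf {r : ℝ | ∃ φ ∈ S, φ x i = r}) ∧
      (∀ φ ∈ S, ∀ (x : ↥(closure Ω)) (i : Fin n), z x i ≤ φ x i) ∧
      (∀ z' ∈ X₀, (∀ φ ∈ S, ∀ (x : ↥(closure Ω)) (i : Fin n), z' x i ≤ φ x i) →
        ∀ (x : ↥(closure Ω)) (i : Fin n), z' x i ≤ z x i)) :=
  compact_subset_of_C0_has_lub_and_glb_general Ω X₀ hX₀ S hSX hne hcomp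
end
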